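/- For any m, m̃ ∈ ℝ, σ², σ̃² > 0, a ∈ ℝ, b ∈ ℝ, and ε > 0, the one-dimensional Gaussian distributions satisfy D_KL(N(am + b, a²σ² + ε) ‖ N(am̃ + b, a²σ̃² + ε)) ≤ D_KL(N(m, σ²) ‖ N(m̃, σ̃²)). -/

import Mathlib

open MeasureTheory ProbabilityTheory
open scoped ENNReal NNReal Classical

noncomputable section

/-- The Kullback-Leibler divergence `D_KL(ν‖μ) = E^ν[log (dν/dμ)]` if `ν ≪ μ` (with value `∞`
if `ν ≪ μ` fails, or if the log-likelihood ratio is not integrable). -/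
def KLDiv {α : Type*} [MeasurableSpace α] (ν μ : Measure α) : ℝ≥0∞ :=
  if ν ≪ μ ∧ Integrable (llr ν μ) ν then ENNReal.ofReal (∫ x, llr ν μ x ∂ν) else ⊤

/-!
`N(am + b, a²σ² + ε)` is the law of `aX + b + Z` for independent `X ~ N(m, σ²)` and
`Z ~ N(0, ε)`, and likewise with `m̃, σ̃²`. So the two measures compared on the left are the
pushforwards of `N(m, σ²) ⊗ N(0, ε)` and `N(m̃, σ̃²) ⊗ N(0, ε)` along the same measurable map, and
the data processing inequality bounds their divergence by that of the product laws, which equals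
`D_KL(N(m, σ²) ‖ N(m̃, σ̃²))` because the noise factor is shared.
-/

open InformationTheory

lemma KLDiv_eq_klDiv {α : Type*} [MeasurableSpace α] {ν μ : Measure α}
    (h : μ.real Set.univ = ν.real Set.univ) : KLDiv ν μ = klDiv ν μ := by
  by_cases hν : ν ≪ μ ∧ Integrable (llr ν μ) ν
  · rw [KLDiv, if_pos hν, klDiv_of_ac_of_integrable hν.1 hν.2, h, add_sub_cancel_right]
  · rw [KLDiv, if_neg hν, eq_comm, klDiv_eq_top_iff]
    exact fun hac hint ↦ hν ⟨hac, hint⟩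

lemma klDiv_map_prod_le {α β γ : Type*} [MeasurableSpace α] [MeasurableSpace β]
    [MeasurableSpace γ] (μ ν : Measure α) [IsFiniteMeasure μ] [IsFiniteMeasure ν]
    (η : Measure β) [IsProbabilityMeasure η] {g : α × β → γ} (hg : Measurable g) :
    klDiv ((μ.prod η).map g) ((ν.prod η).map g) ≤ klDiv μ ν :=
  calc klDiv ((μ.prod η).map g) ((ν.prod η).map g)
      ≤ klDiv (μ.prod η) (ν.prod η) := klDiv_map_le _ _ hg
    _ = klDiv μ ν := by
      rw [← Measure.compProd_const, ← Measure.compProd_const, klDiv_compProd_left]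

lemma gaussianReal_map_affine (m a b : ℝ) (v : ℝ≥0) :
    (gaussianReal m v).map (fun x ↦ a * x + b) = gaussianReal (a * m + b) (‖a‖₊ ^ 2 * v) := by
  rw [show (fun x ↦ a * x + b) = (· + b) ∘ (a * ·) from rfl,
    ← Measure.map_map (by fun_prop) (by fun_prop), gaussianReal_map_const_mul,
    gaussianReal_map_add_const]
  congr 2
  exact NNReal.eq (by simp)

lemma map_prod_gaussianReal_affine_add (m a b : ℝ) (v ε : ℝ≥0) :
    ((gaussianReal m v).prod (gaussianReal 0 ε)).map (fun p ↦ a * p.1 + b + p.2)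
      = gaussianReal (a * m + b) (‖a‖₊ ^ 2 * v + ε) :=
  calc ((gaussianReal m v).prod (gaussianReal 0 ε)).map (fun p ↦ a * p.1 + b + p.2)
      = Measure.map (fun p ↦ p.1 + p.2)
          (((gaussianReal m v).map (fun x ↦ a * x + b)).prod ((gaussianReal 0 ε).map id)) := by
        rw [Measure.map_prod_map _ _ (by fun_prop) measurable_id,
          Measure.map_map (by fun_prop) (by fun_prop)]
        rfl
    _ = gaussianReal (a * m + b) (‖a‖₊ ^ 2 * v) ∗ gaussianReal 0 ε := by
        rw [gaussianReal_map_affine, Measure.map_id]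
        rfl
    _ = gaussianReal (a * m + b) (‖a‖₊ ^ 2 * v + ε) := by
        rw [gaussianReal_conv_gaussianReal, add_zero]

/-- For any means `m, m̃`, variances `σ², σ̃² > 0`, `a, b ∈ ℝ` and `ε > 0`, the one-dimensional
Gaussian distributions satisfy
`D_KL(N(am + b, a²σ² + ε) ‖ N(am̃ + b, a²σ̃² + ε)) ≤ D_KL(N(m, σ²) ‖ N(m̃, σ̃²))`. -/
theorem stmt_14 (m mt σ2 σt2 : ℝ) (hσ2 : 0 < σ2) (hσt2 : 0 < σt2) (a b ε : ℝ) (hε : 0 < ε) :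
    KLDiv (gaussianReal (a * m + b) (a ^ 2 * σ2 + ε).toNNReal)
        (gaussianReal (a * mt + b) (a ^ 2 * σt2 + ε).toNNReal)
      ≤ KLDiv (gaussianReal m σ2.toNNReal) (gaussianReal mt σt2.toNNReal) := by
  have hvar : ∀ s : ℝ, 0 ≤ s → (a ^ 2 * s + ε).toNNReal = ‖a‖₊ ^ 2 * s.toNNReal + ε.toNNReal := by
    intro s hs
    ext
    simp [Real.coe_toNNReal _ (by positivity : 0 ≤ a ^ 2 * s + ε), hs, hε.le]
  rw [KLDiv_eq_klDiv (by simp), KLDiv_eq_klDiv (by simp), hvar σ2 hσ2.le, hvar σt2 hσt2.le,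
    ← map_prod_gaussianReal_affine_add, ← map_prod_gaussianReal_affine_add]
  exact klDiv_map_prod_le _ _ _ (by fun_prop)

end
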